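/- Let (X_n)_{n≥1} be a sequence of independent random variables, each uniformly distributed on [0,1]. Then almost surely, the sequence (X_n) has Poissonian pair correlation: for every s > 0, lim_{N→∞} (1/N)·#{(m,n) : 1 ≤ m ≠ n ≤ N, ‖X_m − X_n‖ ≤ s/N} = 2s, where ‖·‖ denotes the distance to the nearest integer. -/

import Mathlib

/-!
For `m ≠ n` the event `‖X m - X n‖ ≤ t` has probability `min 1 (2 t)`, and the events of two
different unordered pairs are independent: for disjoint pairs because the variables are, and for
pairs `{a, b}`, `{a, c}` because, conditionally on `X a`, the differences `X a - X b` and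
`X a - X c` are independent and uniform modulo `1`. Hence the pair count `C_N(t)` has mean
`(N² - N) min 1 (2 t)` and variance at most twice its mean, so `C_N(s / N) / N` has mean tending
to `2 s` and variance at most `4 s / N`. Along the squares `N = K²` these variances are summable,
which gives almost sure convergence for all rational `s` at once; since `C_N(t)` is monotone in
`N` and in `t`, and `(K + 1)² / K² → 1`, this extends to all `N` and all `s > 0`.
-/

open Filter MeasureTheory

noncomputable def nint (x : ℝ) : ℝ := |x - round x|

open Set ProbabilityTheory Topology

lemma nint_eq_norm (x : ℝ) : nint x = ‖(x : UnitAddCircle)‖ := UnitAddCircle.norm_eq.symm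

lemma continuous_nint : Continuous nint := by
  rw [show nint = fun x : ℝ => ‖(x : UnitAddCircle)‖ from funext nint_eq_norm]
  exact continuous_norm.comp (AddCircle.continuous_mk' 1)

lemma nint_sub_comm (x y : ℝ) : nint (x - y) = nint (y - x) := by
  rw [nint_eq_norm, nint_eq_norm, ← norm_neg, ← AddCircle.coe_neg, neg_sub]

lemma measurableSet_nint_sub_le (t : ℝ) : MeasurableSet {p : ℝ × ℝ | nint (p.1 - p.2) ≤ t} :=
  measurableSet_le (continuous_nint.comp (continuous_fst.sub continuous_snd)).measurable
    measurable_const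

/-- `{y | nint (x - y) ≤ t}` is the preimage of a closed ball of `UnitAddCircle`, and `[0, 1]`
is a fundamental domain of `ℝ → UnitAddCircle` up to a null set. -/
lemma volume_Icc_nint_sub_le (x t : ℝ) :
    volume.restrict (Icc (0 : ℝ) 1) {y | nint (x - y) ≤ t} = ENNReal.ofReal (min 1 (2 * t)) := by
  have hball : {y : ℝ | nint (x - y) ≤ t}
      = ((↑) : ℝ → UnitAddCircle) ⁻¹' Metric.closedBall (x : UnitAddCircle) t := by
    ext y
    rw [mem_preimage, Metric.mem_closedBall, dist_comm, dist_eq_norm, ← AddCircle.coe_sub,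
      ← nint_eq_norm, mem_ofPred_eq]
  have hmk := UnitAddCircle.measurePreserving_mk 0
  rw [zero_add] at hmk
  rw [← Measure.restrict_congr_set Ioc_ae_eq_Icc, hball,
    hmk.measure_preimage measurableSet_closedBall.nullMeasurableSet, AddCircle.volume_closedBall]

section Independence

variable {Ω : Type*} [MeasurableSpace Ω] {μ : Measure Ω} [IsProbabilityMeasure μ]

lemma measure_preimage_prodMk_of_indepFun {α β : Type*} [MeasurableSpace α] [MeasurableSpace β]
    {U : Ω → α} {Z : Ω → β} (hU : Measurable U) (hZ : Measurable Z) (hUZ : IndepFun U Z μ)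
    {S : Set (α × β)} (hS : MeasurableSet S) {c : ENNReal}
    (hslice : ∀ x, μ.map Z (Prod.mk x ⁻¹' S) = c) :
    μ ((fun ω => (U ω, Z ω)) ⁻¹' S) = c := by
  have : IsProbabilityMeasure (μ.map U) := Measure.isProbabilityMeasure_map hU.aemeasurable
  rw [← Measure.map_apply (hU.prodMk hZ) hS,
    (indepFun_iff_map_prod_eq_prod_map_map hU.aemeasurable hZ.aemeasurable).1 hUZ,
    Measure.prod_apply hS]
  simp [hslice]

lemma indepFun_indicator_of_measure_inter {s t : Set Ω} (hs : MeasurableSet s)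
    (ht : MeasurableSet t) (h : μ (s ∩ t) = μ s * μ t) :
    IndepFun (s.indicator (1 : Ω → ℝ)) (t.indicator (1 : Ω → ℝ)) μ := by
  have hst : IndepSet s t μ := (indepSet_iff_measure_inter_eq_mul hs ht μ).2 h
  rw [IndepSet_iff_Indep] at hst
  rw [IndepFun_iff_Indep]
  have hle (u : Set Ω) : MeasurableSpace.comap (u.indicator (1 : Ω → ℝ)) inferInstance
      ≤ MeasurableSpace.generateFrom {u} :=
    (Measurable.indicator (@measurable_one ℝ Ω _ (MeasurableSpace.generateFrom {u}) _)
      (MeasurableSpace.measurableSet_generateFrom (mem_singleton u))).comap_le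
  exact indep_of_indep_of_le_right (indep_of_indep_of_le_left hst (hle s)) (hle t)

variable {U V W : Ω → ℝ} (hU : Measurable U) (hV : Measurable V) (hW : Measurable W)
  (hVunif : μ.map V = volume.restrict (Icc 0 1)) (hWunif : μ.map W = volume.restrict (Icc 0 1))
include hU hV hVunif

lemma measure_nint_sub_le (hUV : IndepFun U V μ) (t : ℝ) :
    μ {ω | nint (U ω - V ω) ≤ t} = ENNReal.ofReal (min 1 (2 * t)) :=
  measure_preimage_prodMk_of_indepFun hU hV hUV (measurableSet_nint_sub_le t)
    fun x => hVunif ▸ volume_Icc_nint_sub_le x t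

include hW hWunif in
lemma measure_nint_sub_le_inter (hUVW : IndepFun U (fun ω => (V ω, W ω)) μ) (hVW : IndepFun V W μ)
    (t : ℝ) :
    μ ({ω | nint (U ω - V ω) ≤ t} ∩ {ω | nint (U ω - W ω) ≤ t})
      = ENNReal.ofReal (min 1 (2 * t)) * ENNReal.ofReal (min 1 (2 * t)) := by
  have hS : MeasurableSet {p : ℝ × ℝ × ℝ | nint (p.1 - p.2.1) ≤ t ∧ nint (p.1 - p.2.2) ≤ t} :=
    ((measurableSet_nint_sub_le t).preimage (measurable_fst.prodMk measurable_snd.fst)).inter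
      ((measurableSet_nint_sub_le t).preimage (measurable_fst.prodMk measurable_snd.snd))
  refine measure_preimage_prodMk_of_indepFun hU (hV.prodMk hW) hUVW hS fun x => ?_
  have hslice : Prod.mk x ⁻¹' {p : ℝ × ℝ × ℝ | nint (p.1 - p.2.1) ≤ t ∧ nint (p.1 - p.2.2) ≤ t}
      = {y | nint (x - y) ≤ t} ×ˢ {z | nint (x - z) ≤ t} := rfl
  rw [(indepFun_iff_map_prod_eq_prod_map_map hV.aemeasurable hW.aemeasurable).1 hVW, hVunif,
    hWunif, hslice, Measure.prod_prod, volume_Icc_nint_sub_le]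

end Independence

section Sequence

variable {Ω : Type*} {X : ℕ → Ω → ℝ}

def closeEvent (X : ℕ → Ω → ℝ) (t : ℝ) (m n : ℕ) : Set Ω := {ω | nint (X m ω - X n ω) ≤ t}

lemma closeEvent_comm (t : ℝ) (m n : ℕ) : closeEvent X t m n = closeEvent X t n m := by
  simp only [closeEvent, nint_sub_comm]

variable [MeasurableSpace Ω] {μ : Measure Ω} [IsProbabilityMeasure μ]

lemma measurableSet_closeEvent (hX : ∀ n, Measurable (X n)) (t : ℝ) (m n : ℕ) :
    MeasurableSet (closeEvent X t m n) :=
  (measurableSet_nint_sub_le t).preimage ((hX m).prodMk (hX n))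

variable (hX : ∀ n, Measurable (X n)) (hindep : iIndepFun X μ)
  (hunif : ∀ n, μ.map (X n) = volume.restrict (Icc 0 1))
include hX hindep hunif

lemma measure_closeEvent {m n : ℕ} (hmn : m ≠ n) (t : ℝ) :
    μ (closeEvent X t m n) = ENNReal.ofReal (min 1 (2 * t)) :=
  measure_nint_sub_le (hX m) (hX n) (hunif n) (hindep.indepFun hmn) t

omit hunif [IsProbabilityMeasure μ] in
lemma measure_closeEvent_inter_of_disjoint {a b c d : ℕ} (hac : a ≠ c) (had : a ≠ d)
    (hbc : b ≠ c) (hbd : b ≠ d) (t : ℝ) :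
    μ (closeEvent X t a b ∩ closeEvent X t c d)
      = μ (closeEvent X t a b) * μ (closeEvent X t c d) :=
  (hindep.indepFun_prodMk_prodMk hX a b c d hac had hbc hbd).measure_inter_preimage_eq_mul _ _
    (measurableSet_nint_sub_le t) (measurableSet_nint_sub_le t)

lemma measure_closeEvent_inter_of_common {a b c : ℕ} (hab : a ≠ b) (hac : a ≠ c) (hbc : b ≠ c)
    (t : ℝ) :
    μ (closeEvent X t a b ∩ closeEvent X t a c)
      = μ (closeEvent X t a b) * μ (closeEvent X t a c) := by
  rw [measure_closeEvent hX hindep hunif hab, measure_closeEvent hX hindep hunif hac]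
  exact measure_nint_sub_le_inter (hX a) (hX b) (hX c) (hunif b) (hunif c)
    (hindep.indepFun_prodMk hX b c a hab.symm hac.symm).symm (hindep.indepFun hbc) t

lemma measure_closeEvent_inter {a b c d : ℕ} (hab : a ≠ b) (hcd : c ≠ d)
    (hne : s(a, b) ≠ s(c, d)) (t : ℝ) :
    μ (closeEvent X t a b ∩ closeEvent X t c d)
      = μ (closeEvent X t a b) * μ (closeEvent X t c d) := by
  rcases eq_or_ne a c with rfl | hac
  · exact measure_closeEvent_inter_of_common hX hindep hunif hab hcd (fun h => hne (h ▸ rfl)) t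
  rcases eq_or_ne a d with rfl | had
  · rw [closeEvent_comm t c]
    exact measure_closeEvent_inter_of_common hX hindep hunif hab hac
      (fun h => hne (h ▸ Sym2.eq_swap)) t
  rcases eq_or_ne b c with rfl | hbc
  · rw [closeEvent_comm t a]
    exact measure_closeEvent_inter_of_common hX hindep hunif hab.symm hcd had t
  rcases eq_or_ne b d with rfl | hbd
  · rw [closeEvent_comm t a, closeEvent_comm t c]
    exact measure_closeEvent_inter_of_common hX hindep hunif hab.symm hbc hac t
  exact measure_closeEvent_inter_of_disjoint hX hindep hac had hbc hbd t

lemma indepFun_indicator_closeEvent {p q : ℕ × ℕ} (hp : p.1 < p.2) (hq : q.1 < q.2)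
    (hpq : p ≠ q) (t : ℝ) :
    IndepFun ((closeEvent X t p.1 p.2).indicator (1 : Ω → ℝ))
      ((closeEvent X t q.1 q.2).indicator (1 : Ω → ℝ)) μ := by
  refine indepFun_indicator_of_measure_inter (measurableSet_closeEvent hX t _ _)
    (measurableSet_closeEvent hX t _ _)
    (measure_closeEvent_inter hX hindep hunif hp.ne hq.ne ?_ t)
  rw [Ne, Sym2.eq_iff]
  rintro (⟨h1, h2⟩ | ⟨h1, h2⟩)
  · exact hpq (Prod.ext h1 h2)
  · omega

end Sequence

section PairCount

variable {Ω : Type*} {X : ℕ → Ω → ℝ}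

noncomputable def pairCount (X : ℕ → Ω → ℝ) (N : ℕ) (t : ℝ) (ω : Ω) : ℕ :=
  ((Finset.Icc 1 N ×ˢ Finset.Icc 1 N).filter
    (fun p => p.1 ≠ p.2 ∧ nint (X p.1 ω - X p.2 ω) ≤ t)).card

lemma pairCount_mono (ω : Ω) {N N' : ℕ} {t t' : ℝ} (hN : N ≤ N') (ht : t ≤ t') :
    pairCount X N t ω ≤ pairCount X N' t' ω := by
  refine Finset.card_le_card fun p hp => ?_
  simp only [Finset.mem_filter, Finset.mem_product, Finset.mem_Icc] at hp ⊢
  exact ⟨⟨⟨hp.1.1.1, hp.1.1.2.trans hN⟩, hp.1.2.1, hp.1.2.2.trans hN⟩, hp.2.1, hp.2.2.trans ht⟩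

lemma pairCount_eq_sum (N : ℕ) (t : ℝ) (ω : Ω) :
    (pairCount X N t ω : ℝ)
      = ∑ p ∈ (Finset.Icc 1 N).offDiag, (closeEvent X t p.1 p.2).indicator 1 ω := by
  have hfilter : (Finset.Icc 1 N ×ˢ Finset.Icc 1 N).filter
      (fun p => p.1 ≠ p.2 ∧ nint (X p.1 ω - X p.2 ω) ≤ t)
      = (Finset.Icc 1 N).offDiag.filter (fun p => nint (X p.1 ω - X p.2 ω) ≤ t) := by
    ext p
    simp only [Finset.mem_filter, Finset.mem_product, Finset.mem_offDiag, and_assoc]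
  rw [pairCount, hfilter, Finset.card_filter, Nat.cast_sum]
  refine Finset.sum_congr rfl fun p _ => ?_
  by_cases h : nint (X p.1 ω - X p.2 ω) ≤ t <;> simp [closeEvent, h]

lemma pairCount_eq_two_mul_sum_lt (N : ℕ) (t : ℝ) (ω : Ω) :
    (pairCount X N t ω : ℝ) = 2 * ∑ p ∈ (Finset.Icc 1 N).offDiag.filter (fun p => p.1 < p.2),
      (closeEvent X t p.1 p.2).indicator 1 ω := by
  rw [pairCount_eq_sum, ← Finset.sum_filter_add_sum_filter_not _ (fun p => p.1 < p.2), two_mul]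
  congr 1
  refine Finset.sum_nbij' Prod.swap Prod.swap ?_ ?_ (fun _ _ => rfl) (fun _ _ => rfl) ?_
  · intro p hp
    simp only [Finset.mem_filter, Finset.mem_offDiag, Prod.fst_swap, Prod.snd_swap] at hp ⊢
    exact ⟨⟨hp.1.2.1, hp.1.1, hp.1.2.2.symm⟩, lt_of_le_of_ne (not_lt.1 hp.2) hp.1.2.2.symm⟩
  · intro p hp
    simp only [Finset.mem_filter, Finset.mem_offDiag, Prod.fst_swap, Prod.snd_swap] at hp ⊢
    exact ⟨⟨hp.1.2.1, hp.1.1, hp.1.2.2.symm⟩, not_lt.2 hp.2.le⟩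
  · intro p _
    rw [closeEvent_comm]
    rfl

end PairCount

section Moments

variable {Ω : Type*} [MeasurableSpace Ω] {μ : Measure Ω} [IsProbabilityMeasure μ]
  {X : ℕ → Ω → ℝ} (hX : ∀ n, Measurable (X n)) (hindep : iIndepFun X μ)
  (hunif : ∀ n, μ.map (X n) = volume.restrict (Icc 0 1))

include hX hindep hunif in
lemma integral_pairCount (N : ℕ) {t : ℝ} (ht : 0 ≤ t) :
    μ[fun ω => (pairCount X N t ω : ℝ)] = ((N : ℝ) ^ 2 - N) * min 1 (2 * t) := by
  have hprob : ∀ p ∈ (Finset.Icc 1 N).offDiag,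
      μ[(closeEvent X t p.1 p.2).indicator 1] = min 1 (2 * t) := by
    intro p hp
    rw [integral_indicator_one (measurableSet_closeEvent hX t p.1 p.2), measureReal_def,
      measure_closeEvent hX hindep hunif (Finset.mem_offDiag.1 hp).2.2,
      ENNReal.toReal_ofReal (le_min zero_le_one (by linarith))]
  simp only [pairCount_eq_sum]
  rw [integral_finsetSum _ fun p _ =>
      (integrable_const 1).indicator (measurableSet_closeEvent hX t p.1 p.2),
    Finset.sum_congr rfl hprob, Finset.sum_const, Finset.offDiag_card, Nat.card_Icc,
    Nat.add_sub_cancel, nsmul_eq_mul, Nat.cast_sub (Nat.le_mul_self N)]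
  push_cast
  ring

include hX hindep hunif in
/-- Over unordered pairs the indicators are pairwise independent, and `C = 2 S` gives
`Var C = 4 Var S ≤ 4 E S = 2 E C`. -/
lemma variance_pairCount_le (N : ℕ) (t : ℝ) :
    Var[fun ω => (pairCount X N t ω : ℝ); μ] ≤ 2 * μ[fun ω => (pairCount X N t ω : ℝ)] := by
  set L := (Finset.Icc 1 N).offDiag.filter (fun p => p.1 < p.2)
  set I : ℕ × ℕ → Ω → ℝ := fun p => (closeEvent X t p.1 p.2).indicator 1
  have hE (p : ℕ × ℕ) : MeasurableSet (closeEvent X t p.1 p.2) :=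
    measurableSet_closeEvent hX t p.1 p.2
  have hcount : (fun ω => (pairCount X N t ω : ℝ)) = fun ω => 2 * (∑ p ∈ L, I p) ω := by
    funext ω
    rw [pairCount_eq_two_mul_sum_lt, Finset.sum_apply]
  have hpairwise : (L : Set (ℕ × ℕ)).Pairwise fun p q => IndepFun (I p) (I q) μ := by
    intro p hp q hq hpq
    simp only [L, Finset.mem_coe, Finset.mem_filter] at hp hq
    exact indepFun_indicator_closeEvent hX hindep hunif hp.2 hq.2 hpq t
  have hsq (p : ℕ × ℕ) : μ[I p ^ 2] = μ[I p] := by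
    congr 1
    funext ω
    by_cases h : ω ∈ closeEvent X t p.1 p.2 <;> simp [I, h]
  calc Var[fun ω => (pairCount X N t ω : ℝ); μ] = 4 * Var[∑ p ∈ L, I p; μ] := by
        rw [hcount, variance_const_mul]
        norm_num
    _ = 4 * ∑ p ∈ L, Var[I p; μ] := by
        rw [IndepFun.variance_sum (X := I) (fun p _ => (memLp_const 1).indicator (hE p)) hpairwise]
    _ ≤ 4 * ∑ p ∈ L, μ[I p] := by
        gcongr with p
        exact (variance_le_expectation_sq
          (measurable_one.indicator (hE p)).aestronglyMeasurable).trans (hsq p).le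
    _ = 2 * μ[fun ω => (pairCount X N t ω : ℝ)] := by
        rw [hcount, integral_const_mul, ← integral_finsetSum _ fun p _ =>
          (integrable_const 1).indicator (hE p)]
        simp only [Finset.sum_apply]
        ring

end Moments

lemma ae_tendsto_sub_integral_of_summable_variance {Ω : Type*} [MeasurableSpace Ω]
    {μ : Measure Ω} [IsFiniteMeasure μ] {Y : ℕ → Ω → ℝ} (hY : ∀ K, MemLp (Y K) 2 μ)
    (hsum : Summable fun K => Var[Y K; μ]) :
    ∀ᵐ ω ∂μ, Tendsto (fun K => Y K ω - μ[Y K]) atTop (𝓝 0) := by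
  set g : ℕ → Ω → ENNReal := fun K ω => ENNReal.ofReal ((Y K ω - μ[Y K]) ^ 2)
  have hg (K : ℕ) : AEMeasurable (g K) μ :=
    (((hY K).aestronglyMeasurable.aemeasurable.sub_const _).pow_const 2).ennreal_ofReal
  have hfin : ∫⁻ ω, ∑' K, g K ω ∂μ ≠ ⊤ := by
    rw [lintegral_tsum hg]
    simp_rw [g, ← evariance_eq_lintegral_ofReal, ← ofReal_variance (hY _)]
    rw [← ENNReal.ofReal_tsum_of_nonneg (fun K => variance_nonneg _ _) hsum]
    exact ENNReal.ofReal_ne_top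
  filter_upwards [ae_lt_top' (AEMeasurable.tsum hg) hfin] with ω hω
  have hsq : Tendsto (fun K => (Y K ω - μ[Y K]) ^ 2) atTop (𝓝 0) := by
    have := (ENNReal.tendsto_toReal ENNReal.zero_ne_top).comp
      (ENNReal.tendsto_atTop_zero_of_tsum_ne_top hω.ne)
    simpa [g, Function.comp_def, ENNReal.toReal_ofReal (sq_nonneg _)] using this
  refine (tendsto_zero_iff_abs_tendsto_zero _).2 ?_
  simpa [Function.comp_def, Real.sqrt_sq_eq_abs] using hsq.sqrt

section Squares

variable {Ω : Type*} [MeasurableSpace Ω] {μ : Measure Ω} [IsProbabilityMeasure μ]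
  {X : ℕ → Ω → ℝ} (hX : ∀ n, Measurable (X n)) (hindep : iIndepFun X μ)
  (hunif : ∀ n, μ.map (X n) = volume.restrict (Icc 0 1))

include hX in
lemma memLp_pairCount (N : ℕ) (t : ℝ) (p : ENNReal) :
    MemLp (fun ω => (pairCount X N t ω : ℝ)) p μ := by
  simp only [pairCount_eq_sum]
  refine memLp_finsetSum _ fun q _ => ?_
  exact (memLp_const (1 : ℝ)).indicator (measurableSet_closeEvent hX t q.1 q.2)

include hX hindep hunif in
lemma variance_pairCount_div_le (N : ℕ) {s : ℝ} (hs : 0 ≤ s) :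
    Var[fun ω => (pairCount X N (s / N) ω : ℝ) / N; μ] ≤ 4 * s / N := by
  rcases Nat.eq_zero_or_pos N with rfl | hN
  · simp only [CharP.cast_eq_zero, div_zero]
    exact (variance_zero μ).le
  have hNR : (0 : ℝ) < N := Nat.cast_pos.2 hN
  simp only [div_eq_mul_inv _ (N : ℝ)]
  rw [variance_mul_const]
  calc Var[fun ω => (pairCount X N (s * (N : ℝ)⁻¹) ω : ℝ); μ] * (N : ℝ)⁻¹ ^ 2
      ≤ 2 * (((N : ℝ) ^ 2 - N) * min 1 (2 * (s * (N : ℝ)⁻¹))) * (N : ℝ)⁻¹ ^ 2 := by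
        rw [← integral_pairCount hX hindep hunif N (by positivity)]
        gcongr
        exact variance_pairCount_le hX hindep hunif N _
    _ ≤ 2 * ((N : ℝ) ^ 2 * (2 * (s * (N : ℝ)⁻¹))) * (N : ℝ)⁻¹ ^ 2 := by
        gcongr
        · exact sub_le_self _ hNR.le
        · exact min_le_right _ _
    _ = 4 * s * (N : ℝ)⁻¹ := by
        field_simp
        ring

include hX hindep hunif in
lemma tendsto_integral_pairCount_div {s : ℝ} (hs : 0 ≤ s) :
    Tendsto (fun N : ℕ => μ[fun ω => (pairCount X N (s / N) ω : ℝ) / N]) atTop (𝓝 (2 * s)) := by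
  have hmean : ∀ᶠ N : ℕ in atTop,
      2 * s - 2 * s / N = μ[fun ω => (pairCount X N (s / N) ω : ℝ) / N] := by
    filter_upwards [eventually_ge_atTop ⌈2 * s⌉₊, eventually_gt_atTop 0] with N h2s hN
    have hNR : (0 : ℝ) < N := Nat.cast_pos.2 hN
    have h2s' : 2 * (s / N) ≤ 1 := by
      rw [mul_div_assoc', div_le_one hNR]
      exact Nat.ceil_le.1 h2s
    rw [integral_div, integral_pairCount hX hindep hunif N (by positivity), min_eq_right h2s']
    field_simp
  refine Tendsto.congr' hmean ?_
  simpa using tendsto_const_nhds.sub (tendsto_const_div_atTop_nhds_zero_nat (2 * s))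

include hX hindep hunif in
lemma ae_tendsto_pairCount_sq {s : ℝ} (hs : 0 ≤ s) :
    ∀ᵐ ω ∂μ, Tendsto (fun K : ℕ => (pairCount X (K ^ 2) (s / (K ^ 2 : ℕ)) ω : ℝ) / (K ^ 2 : ℕ))
      atTop (𝓝 (2 * s)) := by
  set Y : ℕ → Ω → ℝ := fun K ω => (pairCount X (K ^ 2) (s / (K ^ 2 : ℕ)) ω : ℝ) / (K ^ 2 : ℕ)
  have hsum : Summable fun K => Var[Y K; μ] := by
    refine Summable.of_nonneg_of_le (fun K => variance_nonneg _ _)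
      (fun K => variance_pairCount_div_le hX hindep hunif (K ^ 2) hs) ?_
    simpa [div_eq_mul_inv] using
      (Real.summable_nat_pow_inv.2 one_lt_two).mul_left (4 * s)
  have hmean := (tendsto_integral_pairCount_div hX hindep hunif (μ := μ) hs).comp
    (tendsto_pow_atTop two_ne_zero)
  have hY (K : ℕ) : MemLp (Y K) 2 μ := by
    simpa only [Y, div_eq_mul_inv] using (memLp_pairCount hX _ _ 2).mul_const _
  filter_upwards [ae_tendsto_sub_integral_of_summable_variance hY hsum] with ω hω
  simpa [Y] using hω.add hmean

end Squares

section Sandwich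

lemma tendsto_add_one_sq_div_sq :
    Tendsto (fun K : ℕ => ((K : ℝ) + 1) ^ 2 / (K : ℝ) ^ 2) atTop (𝓝 1) := by
  have h : Tendsto (fun K : ℕ => (1 + ((K : ℝ))⁻¹) ^ 2) atTop (𝓝 1) := by
    simpa using ((tendsto_const_nhds (x := (1 : ℝ))).add tendsto_inv_atTop_nhds_zero_nat).pow 2
  refine h.congr' ?_
  filter_upwards [eventually_gt_atTop 0] with K hK
  field_simp

lemma Nat.tendsto_sqrt_atTop : Tendsto Nat.sqrt atTop atTop :=
  tendsto_atTop_atTop.2 fun K => ⟨K ^ 2, fun _ hN => Nat.le_sqrt'.2 hN⟩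

variable {d : ℝ → ℕ → ℕ} (hd : ∀ {u u' : ℝ} {N N' : ℕ}, u ≤ u' → N ≤ N' → d u N ≤ d u' N')
include hd

lemma eventually_div_lt_of_tendsto_sq {s q L b : ℝ} (hq : 0 ≤ q) (hsq : s < q)
    (hlim : Tendsto (fun K : ℕ => (d (q / (K ^ 2 : ℕ)) (K ^ 2) : ℝ) / (K ^ 2 : ℕ)) atTop (𝓝 L))
    (hLb : L < b) :
    ∀ᶠ N : ℕ in atTop, (d (s / N) N : ℝ) / N < b := by
  have hG : Tendsto (fun K : ℕ => (d (q / ((K + 1) ^ 2 : ℕ)) ((K + 1) ^ 2) : ℝ)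
      / ((K + 1) ^ 2 : ℕ) * (((K : ℝ) + 1) ^ 2 / (K : ℝ) ^ 2)) atTop (𝓝 L) := by
    simpa using ((tendsto_add_atTop_iff_nat 1).2 hlim).mul tendsto_add_one_sq_div_sq
  have hsK : ∀ᶠ K : ℕ in atTop, s * (((K : ℝ) + 1) ^ 2 / (K : ℝ) ^ 2) < q := by
    simpa using (tendsto_add_one_sq_div_sq.const_mul s).eventually_lt_const (by simpa using hsq)
  filter_upwards [Nat.tendsto_sqrt_atTop.eventually
    ((hG.eventually_lt_const hLb).and (hsK.and (eventually_gt_atTop 0)))] with N hN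
  obtain ⟨hlt, hsK, hK⟩ := hN
  set K := N.sqrt
  have hKN : (K : ℝ) ^ 2 ≤ N := by exact_mod_cast Nat.sqrt_le' N
  have hNK : (N : ℝ) < ((K : ℝ) + 1) ^ 2 := by exact_mod_cast Nat.lt_succ_sqrt' N
  have hK2 : (0 : ℝ) < (K : ℝ) ^ 2 := by positivity
  have hN : (0 : ℝ) < N := hK2.trans_le hKN
  have hdN : d (s / N) N ≤ d (q / ((K + 1) ^ 2 : ℕ)) ((K + 1) ^ 2) := by
    refine hd ?_ (Nat.lt_succ_sqrt' N).le
    rw [mul_div_assoc', div_lt_iff₀ hK2] at hsK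
    push_cast
    rw [div_le_div_iff₀ hN (by positivity)]
    nlinarith
  calc (d (s / N) N : ℝ) / N ≤ (d (q / ((K + 1) ^ 2 : ℕ)) ((K + 1) ^ 2) : ℝ) / (K : ℝ) ^ 2 :=
        div_le_div₀ (by positivity) (by exact_mod_cast hdN) hK2 hKN
    _ = _ := by push_cast; field_simp
    _ < b := hlt

lemma eventually_lt_div_of_tendsto_sq {s q L b : ℝ} (hq : 0 ≤ q) (hqs : q < s)
    (hlim : Tendsto (fun K : ℕ => (d (q / (K ^ 2 : ℕ)) (K ^ 2) : ℝ) / (K ^ 2 : ℕ)) atTop (𝓝 L))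
    (hbL : b < L) :
    ∀ᶠ N : ℕ in atTop, b < (d (s / N) N : ℝ) / N := by
  have hG : Tendsto (fun K : ℕ => (d (q / (K ^ 2 : ℕ)) (K ^ 2) : ℝ) / (K ^ 2 : ℕ)
      * ((K : ℝ) ^ 2 / ((K : ℝ) + 1) ^ 2)) atTop (𝓝 L) := by
    simpa using hlim.mul (tendsto_add_one_sq_div_sq.inv₀ one_ne_zero)
  have hqK : ∀ᶠ K : ℕ in atTop, q * (((K : ℝ) + 1) ^ 2 / (K : ℝ) ^ 2) < s := by
    simpa using (tendsto_add_one_sq_div_sq.const_mul q).eventually_lt_const (by simpa using hqs)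
  filter_upwards [Nat.tendsto_sqrt_atTop.eventually
    ((hG.eventually_const_lt hbL).and (hqK.and (eventually_gt_atTop 0)))] with N hN
  obtain ⟨hlt, hqK, hK⟩ := hN
  set K := N.sqrt
  have hKN : (K : ℝ) ^ 2 ≤ N := by exact_mod_cast Nat.sqrt_le' N
  have hNK : (N : ℝ) < ((K : ℝ) + 1) ^ 2 := by exact_mod_cast Nat.lt_succ_sqrt' N
  have hK2 : (0 : ℝ) < (K : ℝ) ^ 2 := by positivity
  have hN : (0 : ℝ) < N := hK2.trans_le hKN
  have hdN : d (q / (K ^ 2 : ℕ)) (K ^ 2) ≤ d (s / N) N := by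
    refine hd ?_ (Nat.sqrt_le' N)
    rw [mul_div_assoc', div_lt_iff₀ hK2] at hqK
    push_cast
    rw [div_le_div_iff₀ hK2 hN]
    nlinarith
  calc b < _ := hlt
    _ = (d (q / (K ^ 2 : ℕ)) (K ^ 2) : ℝ) / ((K : ℝ) + 1) ^ 2 := by push_cast; field_simp
    _ ≤ (d (s / N) N : ℝ) / N :=
        div_le_div₀ (by positivity) (by exact_mod_cast hdN) hN hNK.le

lemma tendsto_div_of_tendsto_sq
    (hlim : ∀ q : ℚ, 0 < q →
      Tendsto (fun K : ℕ => (d (q / (K ^ 2 : ℕ)) (K ^ 2) : ℝ) / (K ^ 2 : ℕ)) atTop (𝓝 (2 * q)))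
    {s : ℝ} (hs : 0 < s) :
    Tendsto (fun N : ℕ => (d (s / N) N : ℝ) / N) atTop (𝓝 (2 * s)) := by
  refine tendsto_order.2 ⟨fun b hb => ?_, fun b hb => ?_⟩
  · obtain ⟨q, hbq, hqs⟩ := exists_rat_btwn (max_lt (by linarith : b / 2 < s) hs)
    have hq : (0 : ℝ) < q := (le_max_right _ _).trans_lt hbq
    exact eventually_lt_div_of_tendsto_sq hd hq.le hqs (hlim q (Rat.cast_pos.1 hq))
      (by linarith [le_max_left (b / 2) 0])
  · obtain ⟨q, hsq, hqb⟩ := exists_rat_btwn (by linarith : s < b / 2)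
    have hq : (0 : ℝ) < q := hs.trans hsq
    exact eventually_div_lt_of_tendsto_sq hd hq.le hsq (hlim q (Rat.cast_pos.1 hq)) (by linarith)

end Sandwich

/-- A sequence of independent random variables, each uniformly
distributed on [0,1], almost surely has Poissonian pair correlation. -/
theorem stmt10 {Ω : Type*} [MeasurableSpace Ω] (μ : Measure Ω) [IsProbabilityMeasure μ]
    (X : ℕ → Ω → ℝ) (hmeas : ∀ n, Measurable (X n))
    (hindep : ProbabilityTheory.iIndepFun X μ)
    (hunif : ∀ n, Measure.map (X n) μ = volume.restrict (Set.Icc (0 : ℝ) 1)) :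
    ∀ᵐ ω ∂μ, ∀ s : ℝ, 0 < s →
      Tendsto (fun N : ℕ =>
        (((Finset.Icc 1 N ×ˢ Finset.Icc 1 N).filter
          (fun p => p.1 ≠ p.2 ∧ nint (X p.1 ω - X p.2 ω) ≤ s / N)).card : ℝ) / N)
        atTop (nhds (2 * s)) := by
  have hsq : ∀ᵐ ω ∂μ, ∀ q : ℚ, 0 < q → Tendsto
      (fun K : ℕ => (pairCount X (K ^ 2) (q / (K ^ 2 : ℕ)) ω : ℝ) / (K ^ 2 : ℕ))
      atTop (𝓝 (2 * q)) := by
    refine ae_all_iff.2 fun q => ?_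
    rcases le_or_gt q 0 with hq | hq
    · exact ae_of_all _ fun ω hq' => absurd hq' hq.not_gt
    · filter_upwards [ae_tendsto_pairCount_sq hmeas hindep hunif (s := q) (by positivity)]
        with ω h _ using h
  filter_upwards [hsq] with ω hω s hs
  exact tendsto_div_of_tendsto_sq (fun hu hN => pairCount_mono ω hN hu) hω hs
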